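/- For every integer N ≥ 3 and every real χ, max( 2^{(3N−1)/2}·|sin(χ + (N−1)·π/4)|, 2^{(3N−1)/2}·|sin(χ + (N+1)·π/4)| ) > 2^N, i.e., at least one of the two MABK expressions strictly violates the locally causal bound 2^N. -/
import Mathlib


open Real

lemma max_abs_sin_cos (θ : ℝ) : Real.sqrt 2 / 2 ≤ max |Real.sin θ| |Real.cos θ| := by
  by_contra h
  push_neg at h
  have h1 : |Real.sin θ| < Real.sqrt 2 / 2 := lt_of_le_of_lt (le_max_left _ _) h
  have h2 : |Real.cos θ| < Real.sqrt 2 / 2 := lt_of_le_of_lt (le_max_right _ _) h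
  have hs := Real.sin_sq_add_cos_sq θ
  have h2' : Real.sqrt 2 ^ 2 = 2 := Real.sq_sqrt (by norm_num)
  nlinarith [abs_nonneg (Real.sin θ), abs_nonneg (Real.cos θ), sq_abs (Real.sin θ),
    sq_abs (Real.cos θ), Real.sqrt_nonneg 2]

theorem mabk_planar_strict_violation (N : ℕ) (hN : 3 ≤ N) (χ : ℝ) :
    (2 : ℝ) ^ (N : ℝ) <
      max ((2 : ℝ) ^ ((3 * (N : ℝ) - 1) / 2) *
            |Real.sin (χ + ((N : ℝ) - 1) * Real.pi / 4)|)
          ((2 : ℝ) ^ ((3 * (N : ℝ) - 1) / 2) *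
            |Real.sin (χ + ((N : ℝ) + 1) * Real.pi / 4)|) := by
  set θ : ℝ := χ + ((N : ℝ) - 1) * Real.pi / 4 with hθ
  have hang : χ + ((N : ℝ) + 1) * Real.pi / 4 = θ + Real.pi / 2 := by
    rw [hθ]; ring
  rw [hang, Real.sin_add_pi_div_two]
  have hC : (0:ℝ) < (2 : ℝ) ^ ((3 * (N : ℝ) - 1) / 2) := Real.rpow_pos_of_pos (by norm_num) _
  have hmax : (2 : ℝ) ^ ((3 * (N : ℝ) - 1) / 2) * (Real.sqrt 2 / 2)
      ≤ max ((2 : ℝ) ^ ((3 * (N : ℝ) - 1) / 2) * |Real.sin θ|)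
            ((2 : ℝ) ^ ((3 * (N : ℝ) - 1) / 2) * |Real.cos θ|) := by
    have hm := max_abs_sin_cos θ
    rcases max_cases |Real.sin θ| |Real.cos θ| with ⟨he, _⟩ | ⟨he, _⟩
    · rw [he] at hm
      exact le_max_of_le_left (mul_le_mul_of_nonneg_left hm hC.le)
    · rw [he] at hm
      exact le_max_of_le_right (mul_le_mul_of_nonneg_left hm hC.le)
  refine lt_of_lt_of_le ?_ hmax
  have key : (2 : ℝ) ^ ((3 * (N : ℝ) - 1) / 2) * (Real.sqrt 2 / 2)
      = (2 : ℝ) ^ ((3 * (N : ℝ) - 2) / 2) := by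
    rw [Real.sqrt_eq_rpow]
    rw [show (2:ℝ)^((3 * (N : ℝ) - 2) / 2) = (2:ℝ)^((3 * (N : ℝ) - 1) / 2 + (1/2) - 1) by ring_nf]
    rw [Real.rpow_sub (by norm_num), Real.rpow_add (by norm_num), Real.rpow_one]
    ring
  rw [key]
  apply Real.rpow_lt_rpow_of_exponent_lt (by norm_num)
  have : (3:ℝ) ≤ (N:ℝ) := by exact_mod_cast hN
  linarith
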